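/- arXiv:1311.1174 — 2 statements merged into one kernel-verified Lean document; each statement's English description precedes it below -/
import Mathlib

section
/- Let (A₀,*) be a unitary ring with involution, A = M₂(A₀), J = [[0,1],[-1,0]] ∈ A, and define a new involution on A by a~ = J a* J⁻¹. Then the groups SL_*^+(2,A) and SL_~^-(2,A) are isomorphic; explicitly, conjugation by P = [[0,J],[1,0]] ∈ M₂(A) together with U = diag(J,J) realizes the isomorphism, since P J₊ P* = J₋ U and T~ U = U T* for all T ∈ M₂(A). -/
/-!
Conjugation by `P` is a group automorphism of `M₂(A)ˣ`, so it suffices to transport the defining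
equation. The involution `~` on `M₂(A)` is `*` conjugated by `U = diag(J,J)`, and `*` is
anti-multiplicative; hence for `T' = P T P⁻¹` one gets
`T' J₋ T'~ = P (T J₊ T*) (P* U⁻¹)` once `J₋ U = P J₊ P*`, and both `P` and `P* U⁻¹` are units.
This is an identity in any monoid with an anti-multiplicative unital map.
-/

open Matrix

variable {A₀ : Type} [Ring A₀]

/-- The involution `*` on `A := M₂(A₀)` induced entrywise-transposed by `σ` on `A₀`. -/
def starA (σ : A₀ → A₀) (a : Matrix (Fin 2) (Fin 2) A₀) : Matrix (Fin 2) (Fin 2) A₀ :=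
  (a.map σ)ᵀ

/-- `J = [[0,1],[-1,0]] ∈ A`. -/
def Jmat : Matrix (Fin 2) (Fin 2) A₀ := !![0, 1; -1, 0]

/-- The new involution `a~ = J a* J⁻¹` on `A` (note `J⁻¹ = -J`). -/
def tildeA (σ : A₀ → A₀) (a : Matrix (Fin 2) (Fin 2) A₀) : Matrix (Fin 2) (Fin 2) A₀ :=
  Jmat * starA σ a * (-Jmat)

/-- The extension of an involution `τ` on `A` to `M₂(A)`:
`[[a,b],[c,d]] ↦ [[τa,τc],[τb,τd]]`. -/
def invM₂ {A : Type} (τ : A → A) (T : Matrix (Fin 2) (Fin 2) A) : Matrix (Fin 2) (Fin 2) A :=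
  (T.map τ)ᵀ

section Conjugation

variable {M : Type*} [Monoid M] {s t : M → M}

theorem isometry_iff_conj_isometry (hs_mul : ∀ x y, s (x * y) = s y * s x) (hs_one : s 1 = 1)
    (p u : Mˣ) (ht : ∀ x, t x * u = u * s x) {jp jm : M} (hj : p * jp * s p = jm * u) (x : M) :
    x * jp * s x = jp ↔ (p * x * ↑p⁻¹) * jm * t (p * x * ↑p⁻¹) = jm := by
  have ht' : ∀ y, t y = u * s y * ↑u⁻¹ := fun y => by rw [← ht, Units.mul_inv_cancel_right]
  let w : Mˣ :=
    ⟨s p, s ↑p⁻¹, by rw [← hs_mul, p.inv_mul, hs_one], by rw [← hs_mul, p.mul_inv, hs_one]⟩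
  have hjm : jm = p * jp * ↑(w * u⁻¹) := by
    rw [Units.val_mul, ← mul_assoc, hj, Units.mul_inv_cancel_right]
  have hconj : (p * x * ↑p⁻¹) * jm * t (p * x * ↑p⁻¹) = p * (x * jp * s x) * ↑(w * u⁻¹) := by
    rw [ht', hs_mul, hs_mul, show s ↑p⁻¹ = ↑w⁻¹ from rfl]
    nth_rw 1 [hjm]
    simp only [Units.val_mul, mul_assoc, Units.inv_mul_cancel_left, Units.mul_inv_cancel_left]
    rfl
  rw [hconj, hjm, Units.mul_left_inj, mul_assoc, Units.mul_right_inj]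

end Conjugation

theorem invM₂_of {A : Type} (τ : A → A) (a b c d : A) :
    invM₂ τ !![a, b; c, d] = !![τ a, τ c; τ b, τ d] := by
  ext i j; fin_cases i <;> fin_cases j <;> rfl

section AntiHom

variable {A : Type} [Ring A] {τ : A → A}

theorem invM₂_add (hadd : ∀ x y, τ (x + y) = τ x + τ y) (X Y : Matrix (Fin 2) (Fin 2) A) :
    invM₂ τ (X + Y) = invM₂ τ X + invM₂ τ Y := by
  ext i j; simp [invM₂, hadd]

theorem invM₂_zero (hadd : ∀ x y, τ (x + y) = τ x + τ y) :
    invM₂ τ (0 : Matrix (Fin 2) (Fin 2) A) = 0 :=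
  (AddMonoidHom.mk' _ (invM₂_add hadd)).map_zero

theorem invM₂_mul (hadd : ∀ x y, τ (x + y) = τ x + τ y) (hmul : ∀ x y, τ (x * y) = τ y * τ x)
    (X Y : Matrix (Fin 2) (Fin 2) A) : invM₂ τ (X * Y) = invM₂ τ Y * invM₂ τ X := by
  ext i j; simp [invM₂, mul_apply, Fin.sum_univ_two, hadd, hmul]

theorem invM₂_one (hadd : ∀ x y, τ (x + y) = τ x + τ y) (hone : τ 1 = 1) :
    invM₂ τ (1 : Matrix (Fin 2) (Fin 2) A) = 1 := by
  have h0 : τ 0 = 0 := (AddMonoidHom.mk' τ hadd).map_zero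
  rw [one_fin_two, invM₂_of, hone, h0]

theorem invM₂_mul_diagonal {τ' : A → A} {j : A} (h : ∀ a, τ' a * j = j * τ a)
    (T : Matrix (Fin 2) (Fin 2) A) :
    invM₂ τ' T * diagonal (fun _ => j) = diagonal (fun _ => j) * invM₂ τ T := by
  ext i k; simp [invM₂, h]

end AntiHom

theorem Jmat_mul_Jmat : (Jmat : Matrix (Fin 2) (Fin 2) A₀) * Jmat = -1 := by
  simp [Jmat, one_fin_two]

theorem starA_Jmat {σ : A₀ → A₀} (hadd : ∀ x y, σ (x + y) = σ x + σ y) (hone : σ 1 = 1) :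
    starA σ (Jmat : Matrix (Fin 2) (Fin 2) A₀) = -Jmat := by
  have h0 : σ 0 = 0 := (AddMonoidHom.mk' σ hadd).map_zero
  have hneg : σ (-1) = -1 := by simpa [hone] using (AddMonoidHom.mk' σ hadd).map_neg 1
  change invM₂ σ Jmat = -Jmat
  rw [Jmat, invM₂_of, h0, hneg, hone]
  simp

theorem tildeA_mul_Jmat (σ : A₀ → A₀) (a : Matrix (Fin 2) (Fin 2) A₀) :
    tildeA σ a * Jmat = Jmat * starA σ a := by
  rw [tildeA, mul_assoc, neg_mul, Jmat_mul_Jmat, neg_neg, mul_one]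

theorem stmt1_general (σ : A₀ → A₀)
    (hadd : ∀ x y : A₀, σ (x + y) = σ x + σ y)
    (hmul : ∀ x y : A₀, σ (x * y) = σ y * σ x)
    (hone : σ 1 = 1) :
    letI A := Matrix (Fin 2) (Fin 2) A₀
    letI P : Matrix (Fin 2) (Fin 2) A := !![0, Jmat; 1, 0]
    letI Pinv : Matrix (Fin 2) (Fin 2) A := !![0, 1; -Jmat, 0]
    letI U : Matrix (Fin 2) (Fin 2) A := !![Jmat, 0; 0, Jmat]
    letI Jplus : Matrix (Fin 2) (Fin 2) A := !![0, 1; 1, 0]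
    letI Jminus : Matrix (Fin 2) (Fin 2) A := !![0, 1; -1, 0]
    P * Pinv = 1 ∧ Pinv * P = 1 ∧
    (∀ T : Matrix (Fin 2) (Fin 2) A, invM₂ (tildeA σ) T * U = U * invM₂ (starA σ) T) ∧
    P * Jplus * invM₂ (starA σ) P = Jminus * U ∧
    (∀ T : Matrix (Fin 2) (Fin 2) A,
      T * Jplus * invM₂ (starA σ) T = Jplus ↔
        (P * T * Pinv) * Jminus * invM₂ (tildeA σ) (P * T * Pinv) = Jminus) := by
  set P : Matrix (Fin 2) (Fin 2) (Matrix (Fin 2) (Fin 2) A₀) := !![0, Jmat; 1, 0]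
  set Pinv : Matrix (Fin 2) (Fin 2) (Matrix (Fin 2) (Fin 2) A₀) := !![0, 1; -Jmat, 0]
  set U : Matrix (Fin 2) (Fin 2) (Matrix (Fin 2) (Fin 2) A₀) := !![Jmat, 0; 0, Jmat] with hU_def
  have hstar_add : ∀ a b, starA σ (a + b) = starA σ a + starA σ b := invM₂_add hadd
  have hstar_mul : ∀ a b, starA σ (a * b) = starA σ b * starA σ a := invM₂_mul hadd hmul
  have hstar_zero : starA σ 0 = 0 := invM₂_zero hadd
  have hstar_one : starA σ 1 = 1 := invM₂_one hadd hone
  have hPPinv : P * Pinv = 1 := by simp [P, Pinv, one_fin_two, Jmat_mul_Jmat]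
  have hPinvP : Pinv * P = 1 := by simp [P, Pinv, one_fin_two, Jmat_mul_Jmat]
  have hU : U = diagonal fun _ => Jmat := by
    rw [hU_def]; ext i j; fin_cases i <;> fin_cases j <;> rfl
  have hUnegU : U * -U = 1 := by simp [hU, Jmat_mul_Jmat]
  have hnegUU : -U * U = 1 := by simp [hU, Jmat_mul_Jmat]
  have htilde : ∀ T, invM₂ (tildeA σ) T * U = U * invM₂ (starA σ) T :=
    hU ▸ invM₂_mul_diagonal (tildeA_mul_Jmat σ)
  have hstarP : invM₂ (starA σ) P = Pinv := by
    rw [invM₂_of, hstar_zero, hstar_one, starA_Jmat hadd hone]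
  have hPJP : P * !![0, 1; 1, 0] * invM₂ (starA σ) P = !![0, 1; -1, 0] * U := by
    rw [hstarP]; simp [P, Pinv, hU]
  let p : (Matrix (Fin 2) (Fin 2) (Matrix (Fin 2) (Fin 2) A₀))ˣ := ⟨P, Pinv, hPPinv, hPinvP⟩
  let u : (Matrix (Fin 2) (Fin 2) (Matrix (Fin 2) (Fin 2) A₀))ˣ := ⟨U, -U, hUnegU, hnegUU⟩
  exact ⟨hPPinv, hPinvP, htilde, hPJP, isometry_iff_conj_isometry (t := invM₂ (tildeA σ))
    (invM₂_mul hstar_add hstar_mul) (invM₂_one hstar_add hstar_one) p u htilde hPJP⟩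

/-- `SL_*^+(2,A)` and `SL_~^-(2,A)` are isomorphic, the isomorphism being
realized by conjugation by `P = [[0,J],[1,0]]` (with inverse `[[0,1],[-J,0]]`), thanks to
the identities `T~ U = U T*` (for `U = diag(J,J)`) and `P J₊ P* = J₋ U`.  Since
conjugation by an invertible matrix is multiplicative and bijective, the stated
equivalence of membership conditions realizes the group isomorphism. -/
theorem stmt1 (σ : A₀ → A₀)
    (hadd : ∀ x y : A₀, σ (x + y) = σ x + σ y)
    (hmul : ∀ x y : A₀, σ (x * y) = σ y * σ x)
    (hinv : ∀ x : A₀, σ (σ x) = x)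
    (hone : σ 1 = 1) :
    letI A := Matrix (Fin 2) (Fin 2) A₀
    letI P : Matrix (Fin 2) (Fin 2) A := !![0, Jmat; 1, 0]
    letI Pinv : Matrix (Fin 2) (Fin 2) A := !![0, 1; -Jmat, 0]
    letI U : Matrix (Fin 2) (Fin 2) A := !![Jmat, 0; 0, Jmat]
    letI Jplus : Matrix (Fin 2) (Fin 2) A := !![0, 1; 1, 0]
    letI Jminus : Matrix (Fin 2) (Fin 2) A := !![0, 1; -1, 0]
    P * Pinv = 1 ∧ Pinv * P = 1 ∧
    (∀ T : Matrix (Fin 2) (Fin 2) A, invM₂ (tildeA σ) T * U = U * invM₂ (starA σ) T) ∧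
    P * Jplus * invM₂ (starA σ) P = Jminus * U ∧
    (∀ T : Matrix (Fin 2) (Fin 2) A,
      T * Jplus * invM₂ (starA σ) T = Jplus ↔
        (P * T * Pinv) * Jminus * invM₂ (tildeA σ) (P * T * Pinv) = Jminus) :=
  stmt1_general σ hadd hmul hone
end

section
/- Let q > 3 be odd, A = M_{2n}(F_q), a~ = J_{2n} aᵗ J_{2n}⁻¹, M = (F_q^{2n})² with diagonal right A-action, γ(u,(x,y)) = ψ([xu,y]) for u~ = u, and χ((x,y),(v,z)) = ψ([x,z]-[y,v]). Define U(γ,χ) as the group of A-linear automorphisms β of M with γ(u, β(x,y)) = γ(u,(x,y)) for all symmetric u and all (x,y), and χ(β(x,y),β(v,z)) = χ((x,y),(v,z)) for all elements. Then U(γ,χ) is isomorphic to SL₂(F_q): the A-linear automorphisms of M are exactly maps β(x,y) = (b₁x + b₃y, b₂x + b₄y) with bᵢ ∈ F_q, and β ∈ U(γ,χ) iff b₁b₄ - b₂b₃ = 1. -/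
open Matrix

/-- `J_{2n} = [[0,Iₙ],[-Iₙ,0]] ∈ M_{2n}(F)`. -/
def Jn (F : Type) [Field F] (n : ℕ) : Matrix (Fin n ⊕ Fin n) (Fin n ⊕ Fin n) F :=
  fromBlocks 0 1 (-1) 0

/-- The involution `a~ = J_{2n} aᵗ J_{2n}⁻¹` on `M_{2n}(F)`. -/
noncomputable def tilde {F : Type} [Field F] {n : ℕ}
    (a : Matrix (Fin n ⊕ Fin n) (Fin n ⊕ Fin n) F) :
    Matrix (Fin n ⊕ Fin n) (Fin n ⊕ Fin n) F :=
  Jn F n * aᵀ * (Jn F n)⁻¹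

/-- The symplectic form `[x,y] = x J_{2n} yᵗ` on row vectors `V = F^{2n}`. -/
def symp {F : Type} [Field F] {n : ℕ} (x y : Fin n ⊕ Fin n → F) : F :=
  x ⬝ᵥ (Jn F n *ᵥ y)

/-!
An endomorphism of the row space `R^m` commuting with every right multiplication `x ↦ x a`
is a scalar: test it on the rank-one matrices `eᵢᵀ x`, whose `i`-th row is `x`. Hence an
`A`-linear `β` on `M = V × V` is the action of a `2 × 2` matrix `g` on columns `(x, y)ᵀ`.
For every bilinear `B`, `B(gp.1, gr.2) - B(gp.2, gr.1) = det g • (B(p.1, r.2) - B(p.2, r.1))`;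
for alternating `B`, also `B(gp.1, gp.2) = det g • B(p.1, p.2)`. When `q` is odd and `ũ = u`, the
form `(x, y) ↦ [xu, y]` is alternating. As `[ , ]` takes every value and a nontrivial `ψ` is
primitive, `β` preserves `χ` iff `det g = 1`, and then it preserves `γ` as well; so `U(γ, χ)` is
the image of the faithful action of `SL₂(F_q)`.
-/

section MatrixLinear

variable {m R : Type*} [Fintype m] [DecidableEq m] [CommSemiring R]

def IsMatrixLinear (β : (m → R) × (m → R) → (m → R) × (m → R)) : Prop :=
  ∀ (a : Matrix m m R) x y, β (x ᵥ* a, y ᵥ* a) = ((β (x, y)).1 ᵥ* a, (β (x, y)).2 ᵥ* a)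

theorem Matrix.exists_eq_smul_of_forall_vecMul_comm (f : (m → R) → m → R)
    (hf : ∀ (a : Matrix m m R) x, f (x ᵥ* a) = f x ᵥ* a) : ∃ c : R, ∀ x, f x = c • x := by
  rcases isEmpty_or_nonempty m with _ | ⟨⟨i⟩⟩
  · exact ⟨0, fun x => Subsingleton.elim _ _⟩
  · refine ⟨f (Pi.single i 1) i, fun x => ?_⟩
    have hx : Pi.single i 1 ᵥ* vecMulVec (Pi.single i 1) x = x := by
      rw [vecMul_vecMulVec, single_dotProduct, Pi.single_eq_same, one_mul, one_smul]
    rw [← hx, hf, vecMul_vecMulVec, dotProduct_single, mul_one, hx]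

theorem exists_eq_smul_add_smul_of_isMatrixLinear (β : (m → R) × (m → R) →+ (m → R) × (m → R))
    (hβ : IsMatrixLinear β) :
    ∃ b₁ b₂ b₃ b₄ : R, ∀ x y, β (x, y) = (b₁ • x + b₃ • y, b₂ • x + b₄ • y) := by
  have hl : ∀ (a : Matrix m m R) x, β (x ᵥ* a, 0) = ((β (x, 0)).1 ᵥ* a, (β (x, 0)).2 ᵥ* a) :=
    fun a x => by simpa using hβ a x 0
  have hr : ∀ (a : Matrix m m R) y, β (0, y ᵥ* a) = ((β (0, y)).1 ᵥ* a, (β (0, y)).2 ᵥ* a) :=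
    fun a y => by simpa using hβ a 0 y
  obtain ⟨b₁, h₁⟩ := exists_eq_smul_of_forall_vecMul_comm (fun x => (β (x, 0)).1)
    fun a x => congrArg Prod.fst (hl a x)
  obtain ⟨b₂, h₂⟩ := exists_eq_smul_of_forall_vecMul_comm (fun x => (β (x, 0)).2)
    fun a x => congrArg Prod.snd (hl a x)
  obtain ⟨b₃, h₃⟩ := exists_eq_smul_of_forall_vecMul_comm (fun y => (β (0, y)).1)
    fun a y => congrArg Prod.fst (hr a y)
  obtain ⟨b₄, h₄⟩ := exists_eq_smul_of_forall_vecMul_comm (fun y => (β (0, y)).2)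
    fun a y => congrArg Prod.snd (hr a y)
  refine ⟨b₁, b₂, b₃, b₄, fun x y => ?_⟩
  have hxy : β (x, y) = β (x, 0) + β (0, y) := by
    rw [← map_add, Prod.mk_add_mk, add_zero, zero_add]
  rw [hxy, Prod.add_def, h₁, h₂, h₃, h₄]

end MatrixLinear

section PairAction

variable (R M : Type*) [CommRing R] [AddCommGroup M] [Module R M]

/-- A `2 × 2` matrix `g` acts on `M × M` as on column vectors `(x, y)ᵀ` with entries in `M`. -/
def pairEnd : Matrix (Fin 2) (Fin 2) R →* Module.End R (M × M) where
  toFun g := (g 0 0 • LinearMap.fst R M M + g 0 1 • LinearMap.snd R M M).prod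
    (g 1 0 • LinearMap.fst R M M + g 1 1 • LinearMap.snd R M M)
  map_one' := by ext <;> simp
  map_mul' g h := by ext p <;> simp [Matrix.mul_apply, Fin.sum_univ_two, add_smul, mul_smul]

def pairSL : SpecialLinearGroup (Fin 2) R →* ((M × M) ≃ₗ[R] (M × M)) :=
  (LinearMap.GeneralLinearGroup.generalLinearEquiv R (M × M)).toMonoidHom.comp
    ((Units.map (pairEnd R M)).comp SpecialLinearGroup.toGL)

variable {R M}

@[simp]
theorem pairEnd_apply (g : Matrix (Fin 2) (Fin 2) R) (p : M × M) :
    pairEnd R M g p = (g 0 0 • p.1 + g 0 1 • p.2, g 1 0 • p.1 + g 1 1 • p.2) :=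
  rfl

theorem pairSL_apply (g : SpecialLinearGroup (Fin 2) R) (p : M × M) :
    pairSL R M g p = pairEnd R M g p :=
  rfl

theorem eq_pairEnd_of_forall_eq_smul_add_smul {β : M × M → M × M} {b₁ b₂ b₃ b₄ : R}
    (hβ : ∀ x y, β (x, y) = (b₁ • x + b₃ • y, b₂ • x + b₄ • y)) :
    β = pairEnd R M !![b₁, b₃; b₂, b₄] :=
  funext fun p => by simp [hβ p.1 p.2]

theorem pairSL_injective [IsDomain R] [Module.IsTorsionFree R M] [Nontrivial M] :
    Function.Injective (pairSL R M) := by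
  intro g h hgh
  obtain ⟨v, hv⟩ := exists_ne (0 : M)
  have h₁ := LinearEquiv.congr_fun hgh (v, 0)
  have h₂ := LinearEquiv.congr_fun hgh (0, v)
  simp only [pairSL_apply, pairEnd_apply, smul_zero, add_zero, zero_add, Prod.mk.injEq] at h₁ h₂
  ext i j
  fin_cases i <;> fin_cases j
  exacts [smul_left_injective R hv h₁.1, smul_left_injective R hv h₂.1,
    smul_left_injective R hv h₁.2, smul_left_injective R hv h₂.2]

theorem det_smul_pairEnd_sub {N : Type*} [AddCommGroup N] [Module R N]
    (B : M →ₗ[R] M →ₗ[R] N) (g : Matrix (Fin 2) (Fin 2) R) (p r : M × M) :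
    B (pairEnd R M g p).1 (pairEnd R M g r).2 - B (pairEnd R M g p).2 (pairEnd R M g r).1 =
      g.det • (B p.1 r.2 - B p.2 r.1) := by
  simp only [pairEnd_apply, map_add, map_smul, LinearMap.add_apply, LinearMap.smul_apply,
    det_fin_two]
  module

theorem LinearMap.IsAlt.apply_pairEnd {N : Type*} [AddCommGroup N] [Module R N]
    {B : M →ₗ[R] M →ₗ[R] N} (hB : B.IsAlt) (g : Matrix (Fin 2) (Fin 2) R) (p : M × M) :
    B (pairEnd R M g p).1 (pairEnd R M g p).2 = g.det • B p.1 p.2 := by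
  simp only [pairEnd_apply, map_add, map_smul, LinearMap.add_apply, LinearMap.smul_apply,
    hB.self_eq_zero, ← hB.neg p.1 p.2, det_fin_two]
  module

theorem isMatrixLinear_pairEnd {m : Type*} [Fintype m] (g : Matrix (Fin 2) (Fin 2) R) :
    IsMatrixLinear (pairEnd R (m → R) g) := by
  intro a x y
  simp only [pairEnd_apply, add_vecMul, smul_vecMul]

end PairAction

theorem Matrix.isAlt_toLinearMap₂'_of_transpose_eq_neg {m R : Type*} [Fintype m] [DecidableEq m]
    [CommRing R] [NoZeroDivisors R] (h2 : (2 : R) ≠ 0) {A : Matrix m m R} (hA : Aᵀ = -A) :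
    (toLinearMap₂' R A : (m → R) →ₗ[R] (m → R) →ₗ[R] R).IsAlt := by
  intro x
  have hneg : x ⬝ᵥ (A *ᵥ x) = -(x ⬝ᵥ (A *ᵥ x)) := by
    conv_lhs => rw [← vecMul_transpose, hA, vecMul_neg, dotProduct_neg, dotProduct_comm,
      ← dotProduct_mulVec]
  rw [toLinearMap₂'_apply']
  exact (mul_eq_zero.mp (by linear_combination hneg : (2 : R) * _ = 0)).resolve_left h2

theorem AddChar.forall_apply_mul_eq_iff {F C : Type*} [Field F] [CommMonoid C] {ψ : AddChar F C}
    (hψ : ψ ≠ 1) {d : F} : (∀ t, ψ (d * t) = ψ t) ↔ d = 1 := by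
  rw [← (to_mulShift_inj_of_isPrimitive (IsPrimitive.of_ne_one hψ)).eq_iff, mulShift_one,
    DFunLike.ext_iff]
  rfl

section Symplectic

variable {F : Type} [Field F] {n : ℕ}

local notation "V" => Fin n ⊕ Fin n → F

theorem Jn_transpose : (Jn F n)ᵀ = -Jn F n := by
  rw [Jn, fromBlocks_transpose, fromBlocks_neg]
  simp

theorem Jn_mul_Jn : Jn F n * Jn F n = -1 := by
  rw [Jn, fromBlocks_multiply, ← fromBlocks_one, fromBlocks_neg]
  simp

theorem Jn_inv : (Jn F n)⁻¹ = -Jn F n :=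
  inv_eq_right_inv (by rw [mul_neg, Jn_mul_Jn, neg_neg])

theorem transpose_mul_Jn_of_tilde_eq {u : Matrix (Fin n ⊕ Fin n) (Fin n ⊕ Fin n) F}
    (hu : tilde u = u) : (u * Jn F n)ᵀ = -(u * Jn F n) := by
  have h : Jn F n * uᵀ = u * Jn F n := by
    conv_rhs => rw [← hu, tilde, Jn_inv, Matrix.mul_assoc, neg_mul, Jn_mul_Jn]
    simp
  rw [transpose_mul, Jn_transpose, neg_mul, h]

theorem symp_eq_toLinearMap₂' (x y : V) :
    symp x y = toLinearMap₂' F (Jn F n) x y :=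
  (toLinearMap₂'_apply' _ x y).symm

theorem symp_vecMul_eq_toLinearMap₂' (u : Matrix (Fin n ⊕ Fin n) (Fin n ⊕ Fin n) F)
    (x y : V) : symp (x ᵥ* u) y = toLinearMap₂' F (u * Jn F n) x y := by
  rw [symp, toLinearMap₂'_apply', dotProduct_mulVec, dotProduct_mulVec, vecMul_vecMul]

theorem symp_surjective (hn : 0 < n) (t : F) : ∃ x y : V, symp x y = t :=
  ⟨Pi.single (Sum.inl ⟨0, hn⟩) t, Pi.single (Sum.inr ⟨0, hn⟩) 1, by
    simp [symp, Jn, mulVec_single, single_dotProduct]⟩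

theorem symp_pairEnd_sub (g : Matrix (Fin 2) (Fin 2) F) (p r : V × V) :
    symp (pairEnd F _ g p).1 (pairEnd F _ g r).2 - symp (pairEnd F _ g p).2 (pairEnd F _ g r).1 =
      g.det * (symp p.1 r.2 - symp p.2 r.1) := by
  simp only [symp_eq_toLinearMap₂']
  exact det_smul_pairEnd_sub _ g p r

theorem symp_vecMul_pairEnd (h2 : (2 : F) ≠ 0) {u : Matrix (Fin n ⊕ Fin n) (Fin n ⊕ Fin n) F}
    (hu : tilde u = u) (g : Matrix (Fin 2) (Fin 2) F) (p : V × V) :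
    symp ((pairEnd F _ g p).1 ᵥ* u) (pairEnd F _ g p).2 = g.det * symp (p.1 ᵥ* u) p.2 := by
  simp only [symp_vecMul_eq_toLinearMap₂']
  exact (isAlt_toLinearMap₂'_of_transpose_eq_neg h2 (transpose_mul_Jn_of_tilde_eq hu)).apply_pairEnd
    g p

variable {C : Type*} [CommMonoid C]

def PreservesGamma (ψ : AddChar F C) (β : V × V → V × V) : Prop :=
  ∀ u : Matrix (Fin n ⊕ Fin n) (Fin n ⊕ Fin n) F, tilde u = u →
    ∀ p, ψ (symp ((β p).1 ᵥ* u) (β p).2) = ψ (symp (p.1 ᵥ* u) p.2)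

def PreservesChi (ψ : AddChar F C) (β : V × V → V × V) : Prop :=
  ∀ p r, ψ (symp (β p).1 (β r).2 - symp (β p).2 (β r).1) = ψ (symp p.1 r.2 - symp p.2 r.1)

variable {ψ : AddChar F C}

theorem preservesChi_pairEnd_iff (hψ : ψ ≠ 1) (hn : 0 < n) (g : Matrix (Fin 2) (Fin 2) F) :
    PreservesChi ψ (pairEnd F V g) ↔ g.det = 1 := by
  rw [← AddChar.forall_apply_mul_eq_iff hψ]
  simp only [PreservesChi, symp_pairEnd_sub]
  refine ⟨fun h t => ?_, fun h p r => h _⟩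
  obtain ⟨x, y, rfl⟩ := symp_surjective hn t
  simpa [symp_eq_toLinearMap₂'] using h (x, 0) (0, y)

theorem preservesGamma_pairEnd (h2 : (2 : F) ≠ 0) {g : Matrix (Fin 2) (Fin 2) F}
    (hg : g.det = 1) : PreservesGamma ψ (pairEnd F V g) := by
  intro u hu p
  rw [symp_vecMul_pairEnd h2 hu, hg, one_mul]

theorem preserves_pairEnd_iff (h2 : (2 : F) ≠ 0) (hψ : ψ ≠ 1) (hn : 0 < n)
    (g : Matrix (Fin 2) (Fin 2) F) :
    PreservesGamma ψ (pairEnd F V g) ∧ PreservesChi ψ (pairEnd F V g) ↔ g.det = 1 :=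
  ⟨fun h => (preservesChi_pairEnd_iff hψ hn g).1 h.2,
    fun hg => ⟨preservesGamma_pairEnd h2 hg, (preservesChi_pairEnd_iff hψ hn g).2 hg⟩⟩

theorem preserves_iff_of_forall_eq_smul_add_smul (h2 : (2 : F) ≠ 0) (hψ : ψ ≠ 1) (hn : 0 < n)
    {β : V × V → V × V} {b₁ b₂ b₃ b₄ : F}
    (hβ : ∀ x y, β (x, y) = (b₁ • x + b₃ • y, b₂ • x + b₄ • y)) :
    PreservesGamma ψ β ∧ PreservesChi ψ β ↔ b₁ * b₄ - b₂ * b₃ = 1 := by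
  rw [eq_pairEnd_of_forall_eq_smul_add_smul hβ, preserves_pairEnd_iff h2 hψ hn, det_fin_two_of,
    mul_comm b₃]

theorem mem_range_pairSL_iff (h2 : (2 : F) ≠ 0) (hψ : ψ ≠ 1) (hn : 0 < n)
    (β : (V × V) ≃ₗ[F] (V × V)) :
    β ∈ (pairSL F V).range ↔ IsMatrixLinear β ∧ PreservesGamma ψ β ∧ PreservesChi ψ β := by
  constructor
  · rintro ⟨g, rfl⟩
    exact ⟨isMatrixLinear_pairEnd (g : Matrix (Fin 2) (Fin 2) F),
      (preserves_pairEnd_iff h2 hψ hn g).2 g.2⟩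
  · rintro ⟨hlin, hpres⟩
    obtain ⟨b₁, b₂, b₃, b₄, hβ⟩ :=
      exists_eq_smul_add_smul_of_isMatrixLinear β.toLinearMap.toAddMonoidHom hlin
    have hdet := (preserves_iff_of_forall_eq_smul_add_smul h2 hψ hn hβ).1 hpres
    refine ⟨⟨!![b₁, b₃; b₂, b₄], by rw [det_fin_two_of, mul_comm b₃, hdet]⟩, ?_⟩
    exact LinearEquiv.ext fun p => (congrFun (eq_pairEnd_of_forall_eq_smul_add_smul hβ) p).symm

end Symplectic

theorem stmt15_general (F : Type) [Field F] [Fintype F]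
    (hq : Odd (Fintype.card F))
    (ψ : AddChar F ℂ) (hψ : ψ ≠ 1) (n : ℕ) (hn : 0 < n) :
    letI V := Fin n ⊕ Fin n → F
    letI χ : V × V → V × V → ℂ := fun p r => ψ (symp p.1 r.2 - symp p.2 r.1)
    letI γ : Matrix (Fin n ⊕ Fin n) (Fin n ⊕ Fin n) F → V × V → ℂ :=
      fun u p => ψ (symp (p.1 ᵥ* u) p.2)
    letI Aequiv : ((V × V) ≃ₗ[F] (V × V)) → Prop := fun β =>
      ∀ (a : Matrix (Fin n ⊕ Fin n) (Fin n ⊕ Fin n) F) (x y : V),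
        β (x ᵥ* a, y ᵥ* a) = ((β (x, y)).1 ᵥ* a, (β (x, y)).2 ᵥ* a)
    letI γpres : ((V × V) ≃ₗ[F] (V × V)) → Prop := fun β =>
      ∀ u : Matrix (Fin n ⊕ Fin n) (Fin n ⊕ Fin n) F, tilde u = u →
        ∀ p : V × V, γ u (β p) = γ u p
    letI χpres : ((V × V) ≃ₗ[F] (V × V)) → Prop := fun β =>
      ∀ p r : V × V, χ (β p) (β r) = χ p r
    (∀ β : (V × V) ≃ₗ[F] (V × V), Aequiv β →
      ∃ b₁ b₂ b₃ b₄ : F, ∀ x y : V, β (x, y) = (b₁ • x + b₃ • y, b₂ • x + b₄ • y)) ∧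
    (∀ β : (V × V) ≃ₗ[F] (V × V), Aequiv β → ∀ b₁ b₂ b₃ b₄ : F,
      (∀ x y : V, β (x, y) = (b₁ • x + b₃ • y, b₂ • x + b₄ • y)) →
        ((γpres β ∧ χpres β) ↔ b₁ * b₄ - b₂ * b₃ = 1)) ∧
    (∀ S : Subgroup ((V × V) ≃ₗ[F] (V × V)),
      (∀ β, β ∈ S ↔ (Aequiv β ∧ γpres β ∧ χpres β)) →
        Nonempty (S ≃* Matrix.SpecialLinearGroup (Fin 2) F)) := by
  have h2 : (2 : F) ≠ 0 := Ring.two_ne_zero fun hchar => by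
    have := FiniteField.even_card_iff_char_two.1 hchar
    rw [Nat.odd_iff] at hq
    omega
  refine ⟨fun β hβ => exists_eq_smul_add_smul_of_isMatrixLinear β.toLinearMap.toAddMonoidHom hβ,
    fun β _ b₁ b₂ b₃ b₄ hβ => preserves_iff_of_forall_eq_smul_add_smul h2 hψ hn hβ,
    fun S hS => ?_⟩
  have hrange : S = (pairSL F (Fin n ⊕ Fin n → F)).range :=
    Subgroup.ext fun β => (hS β).trans (mem_range_pairSL_iff h2 hψ hn β).symm
  have : Nonempty (Fin n) := ⟨⟨0, hn⟩⟩
  exact ⟨(MulEquiv.subgroupCongr hrange).trans (MonoidHom.ofInjective pairSL_injective).symm⟩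

/-- The unitary group `U(γ,χ)` of `A`-linear automorphisms of
`M = (F_q^{2n})²` preserving `γ` and `χ` is isomorphic to `SL₂(F_q)`: the `A`-linear
automorphisms are exactly the maps `β(x,y) = (b₁x + b₃y, b₂x + b₄y)` with `bᵢ ∈ F_q`,
and such a `β` lies in `U(γ,χ)` iff `b₁b₄ - b₂b₃ = 1`. -/
theorem stmt15 (F : Type) [Field F] [Fintype F]
    (hq : Odd (Fintype.card F)) (hq3 : 3 < Fintype.card F)
    (ψ : AddChar F ℂ) (hψ : ψ ≠ 1) (n : ℕ) (hn : 0 < n) :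
    letI V := Fin n ⊕ Fin n → F
    letI χ : V × V → V × V → ℂ := fun p r => ψ (symp p.1 r.2 - symp p.2 r.1)
    letI γ : Matrix (Fin n ⊕ Fin n) (Fin n ⊕ Fin n) F → V × V → ℂ :=
      fun u p => ψ (symp (p.1 ᵥ* u) p.2)
    letI Aequiv : ((V × V) ≃ₗ[F] (V × V)) → Prop := fun β =>
      ∀ (a : Matrix (Fin n ⊕ Fin n) (Fin n ⊕ Fin n) F) (x y : V),
        β (x ᵥ* a, y ᵥ* a) = ((β (x, y)).1 ᵥ* a, (β (x, y)).2 ᵥ* a)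
    letI γpres : ((V × V) ≃ₗ[F] (V × V)) → Prop := fun β =>
      ∀ u : Matrix (Fin n ⊕ Fin n) (Fin n ⊕ Fin n) F, tilde u = u →
        ∀ p : V × V, γ u (β p) = γ u p
    letI χpres : ((V × V) ≃ₗ[F] (V × V)) → Prop := fun β =>
      ∀ p r : V × V, χ (β p) (β r) = χ p r
    (∀ β : (V × V) ≃ₗ[F] (V × V), Aequiv β →
      ∃ b₁ b₂ b₃ b₄ : F, ∀ x y : V, β (x, y) = (b₁ • x + b₃ • y, b₂ • x + b₄ • y)) ∧
    (∀ β : (V × V) ≃ₗ[F] (V × V), Aequiv β → ∀ b₁ b₂ b₃ b₄ : F,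
      (∀ x y : V, β (x, y) = (b₁ • x + b₃ • y, b₂ • x + b₄ • y)) →
        ((γpres β ∧ χpres β) ↔ b₁ * b₄ - b₂ * b₃ = 1)) ∧
    (∀ S : Subgroup ((V × V) ≃ₗ[F] (V × V)),
      (∀ β, β ∈ S ↔ (Aequiv β ∧ γpres β ∧ χpres β)) →
        Nonempty (S ≃* Matrix.SpecialLinearGroup (Fin 2) F)) :=
  stmt15_general F hq ψ hψ n hn
end
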